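/- Let (X,d) and (X_∞,d_∞) be metric spaces. Assume there exist a sequence (λ_i) of positive reals with λ_i → 0 as i → ∞ and maps φ_i : X_∞ → X such that for all x, y ∈ X_∞ one has (1/λ_i)·d(φ_i(x),φ_i(y)) → d_∞(x,y) as i → ∞. If d is finite dimensional on X (for some constants C* ∈ [1,∞) and r* ∈ (0,∞]), then d_∞ is finite dimensional on X_∞ (with the same constant C*, for radii < r*). -/

import Mathlib

open scoped ENNReal

/-- The closed ball of center `p` and radius `r` for a distance-like function `d`. -/
def QBall {X : Type*} (d : X → X → ℝ) (p : X) (r : ℝ) : Set X := {q | d q p ≤ r}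

/-- A family of Besicovitch balls. -/
def IsBesicovitchFamily {X : Type*} (d : X → X → ℝ) (s : Finset X) (r : X → ℝ) : Prop :=
  (∀ x ∈ s, 0 < r x) ∧ (∀ x ∈ s, ∀ y ∈ s, x ≠ y → x ∉ QBall d y (r y)) ∧
    ∃ z, ∀ x ∈ s, z ∈ QBall d x (r x)

/-- `d` is finite dimensional on `Y` with constants `Cs ∈ [1,∞)` and `rs ∈ (0,∞]`:
every family of Besicovitch balls with centers in `Y` and radii `< rs` has cardinality
at most `Cs`. -/
def FiniteDimOn {X : Type*} (d : X → X → ℝ) (Y : Set X) (Cs : ℝ) (rs : ℝ≥0∞) : Prop :=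
  ∀ (s : Finset X) (r : X → ℝ), IsBesicovitchFamily d s r → (↑s : Set X) ⊆ Y →
    (∀ x ∈ s, ENNReal.ofReal (r x) < rs) → (s.card : ℝ) ≤ Cs

/-!
Given a Besicovitch family in `Xinf` with centers `s`, radii `r` and common point `z`, pick
`δ > 0` with `r y + δ < d∞(x, y)` for all distinct centers (possible since `s` is finite). These
strict inequalities, and `d∞(z, x) < r x + δ`, survive the convergence of the rescaled distances,
so for large `i` the balls `B(φ_i x, λ_i (r x + δ))` form a Besicovitch family in `X` through
`φ_i z`, with as many balls since separation makes `φ_i` injective on `s`. As `λ_i → 0`, the new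
radii are eventually below `r x < r*`.
-/

open Filter Topology

theorem Finset.exists_pos_forall_add_lt {ι : Type*} (s : Finset ι) {a b : ι → ℝ}
    (h : ∀ i ∈ s, a i < b i) : ∃ δ, 0 < δ ∧ ∀ i ∈ s, a i + δ < b i := by
  have hsmall : ∀ᶠ δ in 𝓝[>] (0 : ℝ), ∀ i ∈ s, a i + δ < b i := by
    refine (eventually_all_finset s).2 fun i hi => nhdsWithin_le_nhds ?_
    have hcont : Tendsto (fun δ : ℝ => a i + δ) (𝓝 0) (𝓝 (a i)) := by
      simpa using tendsto_const_nhds.add (tendsto_id (x := 𝓝 (0 : ℝ)))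
    exact hcont.eventually_lt_const (h i hi)
  exact (hsmall.and self_mem_nhdsWithin).exists.imp fun δ hδ => ⟨hδ.2, hδ.1⟩

section Rescaling

variable {ι : Type*} {l : Filter ι} {lam u : ι → ℝ} {L c : ℝ}

theorem eventually_mul_lt_of_tendsto_one_div_mul (hlam : ∀ i, 0 < lam i)
    (hu : Tendsto (fun i => 1 / lam i * u i) l (𝓝 L)) (hc : c < L) :
    ∀ᶠ i in l, lam i * c < u i :=
  (hu.eventually_const_lt hc).mono fun i hi => by
    rwa [one_div_mul_eq_div, lt_div_iff₀' (hlam i)] at hi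

theorem eventually_lt_mul_of_tendsto_one_div_mul (hlam : ∀ i, 0 < lam i)
    (hu : Tendsto (fun i => 1 / lam i * u i) l (𝓝 L)) (hc : L < c) :
    ∀ᶠ i in l, u i < lam i * c :=
  (hu.eventually_lt_const hc).mono fun i hi => by
    rwa [one_div_mul_eq_div, div_lt_iff₀' (hlam i)] at hi

end Rescaling

theorem FiniteDimOn.card_le_of_map {X α : Type*} [PseudoMetricSpace X] [Nonempty α] {Cs : ℝ}
    {rs : ℝ≥0∞} (h : FiniteDimOn (fun p q : X => dist p q) Set.univ Cs rs) {s : Finset α}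
    {f : α → X} {ρ : α → ℝ} {w : X} (hpos : ∀ x ∈ s, 0 < ρ x)
    (hsep : ∀ x ∈ s, ∀ y ∈ s, x ≠ y → ρ y < dist (f x) (f y))
    (hcover : ∀ x ∈ s, dist w (f x) ≤ ρ x) (hrad : ∀ x ∈ s, ENNReal.ofReal (ρ x) < rs) :
    (s.card : ℝ) ≤ Cs := by
  classical
  have hinj : Set.InjOn f s := fun x hx y hy hxy => by
    by_contra hne
    have := hsep x hx y hy hne
    rw [hxy, dist_self] at this
    exact (hpos y hy).not_gt this
  have hg : ∀ x ∈ s, Function.invFunOn f s (f x) = x := fun x hx =>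
    hinj.leftInvOn_invFunOn hx
  rw [← Finset.card_image_of_injOn hinj]
  refine h _ (fun p => ρ (Function.invFunOn f s p)) ⟨?_, ?_, w, ?_⟩ (Set.subset_univ _) ?_
  · exact Finset.forall_mem_image.2 fun x hx => by simpa only [hg x hx] using hpos x hx
  · refine Finset.forall_mem_image.2 fun x hx => Finset.forall_mem_image.2 fun y hy hne => ?_
    simpa only [hg y hy, QBall, Set.mem_ofPred_eq, not_le] using
      hsep x hx y hy (ne_of_apply_ne f hne)
  · exact Finset.forall_mem_image.2 fun x hx => by
      simpa only [hg x hx, QBall, Set.mem_ofPred_eq] using hcover x hx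
  · exact Finset.forall_mem_image.2 fun x hx => by simpa only [hg x hx] using hrad x hx

theorem statement7 {X Xinf : Type*} [MetricSpace X] [MetricSpace Xinf]
    (lam : ℕ → ℝ) (hlam : ∀ i, 0 < lam i)
    (hlim : Filter.Tendsto lam Filter.atTop (nhds 0))
    (φ : ℕ → Xinf → X)
    (hconv : ∀ x y : Xinf,
      Filter.Tendsto (fun i => (1 / lam i) * dist (φ i x) (φ i y))
        Filter.atTop (nhds (dist x y)))
    (Cs : ℝ) (rs : ℝ≥0∞)
    (h : FiniteDimOn (fun p q : X => dist p q) Set.univ Cs rs) :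
    FiniteDimOn (fun p q : Xinf => dist p q) Set.univ Cs rs := by
  rintro s r ⟨hpos, hdisj, z, hz⟩ - hrad
  have : Nonempty Xinf := ⟨z⟩
  obtain ⟨δ, hδ, hgap⟩ := s.offDiag.exists_pos_forall_add_lt (a := fun p => r p.2)
    (b := fun p => dist p.1 p.2) fun p hp => by
      obtain ⟨hx, hy, hne⟩ := Finset.mem_offDiag.1 hp
      simpa [QBall] using hdisj p.1 hx p.2 hy hne
  have hsep : ∀ᶠ i in atTop, ∀ x ∈ s, ∀ y ∈ s, x ≠ y →
      lam i * (r y + δ) < dist (φ i x) (φ i y) := by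
    refine (eventually_all_finset s).2 fun x hx => (eventually_all_finset s).2 fun y hy =>
      eventually_imp_distrib_left.2 fun hne => ?_
    exact eventually_mul_lt_of_tendsto_one_div_mul hlam (hconv x y)
      (hgap (x, y) (Finset.mem_offDiag.2 ⟨hx, hy, hne⟩))
  have hcover : ∀ᶠ i in atTop, ∀ x ∈ s, dist (φ i z) (φ i x) < lam i * (r x + δ) :=
    (eventually_all_finset s).2 fun x hx => eventually_lt_mul_of_tendsto_one_div_mul hlam
      (hconv z x) (lt_add_of_le_of_pos (hz x hx) hδ)
  have hshrink : ∀ᶠ i in atTop, ∀ x ∈ s, lam i * (r x + δ) < r x :=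
    (eventually_all_finset s).2 fun x hx =>
      (zero_mul (r x + δ) ▸ hlim.mul_const (r x + δ)).eventually_lt_const (hpos x hx)
  obtain ⟨i, hsep, hcover, hshrink⟩ := (hsep.and (hcover.and hshrink)).exists
  exact h.card_le_of_map (fun x hx => mul_pos (hlam i) (by linarith [hpos x hx])) hsep
    (fun x hx => (hcover x hx).le)
    (fun x hx => ((ENNReal.ofReal_lt_ofReal_iff (hpos x hx)).2 (hshrink x hx)).trans (hrad x hx))
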